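/- arXiv:2307.08824 — 2 statements merged into one kernel-verified Lean document; each statement's English description precedes it below -/
import Mathlib

section
/- There exists a bilaterally-complete tripartite graph G = (A,B,C;E) in which no minimum 𝒯-transversal is contained in the union of two sides; in fact, every minimum 𝒯-transversal of G contains an edge in each of the three sides of G, and the number of edges in the smallest side of G is strictly greater than τ△(G). (An example is the graph with G[A∪B] ≅ G[A∪C] ≅ K_{2,4}, A = {0,1}, B = {2,3,4,5}, C = {6,7,8,9}, and E_BC = {26, 27, 28, 38, 39, 49, 59}, which has τ△(G) = 5 while its smallest side has 7 edges.) -/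
/-!
The five edges 02, 12, 09, 19, 38 meet every triangle, while the triangles 026, 038, 049, 127, 159
are pairwise edge-disjoint, so τ△ = 5. For each side there are six triangles any two of which share
only edges of that side, so a transversal avoiding that side has at least six edges. The sides have
8, 8 and 7 edges.
-/

open SimpleGraph

variable {V : Type*}

/-- The set of edges of a triangle, given by its vertex set `t`:
all unordered pairs of distinct vertices of `t`. -/
def triangleEdges (t : Finset V) : Set (Sym2 V) :=
  {e | ∃ u ∈ t, ∃ v ∈ t, u ≠ v ∧ e = s(u, v)}

/-- `E'` is a `𝒯`-transversal of `G`: a set of edges of `G` meeting every triangle of `G`. -/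
def IsTriTransversal (G : SimpleGraph V) (E' : Set (Sym2 V)) : Prop :=
  E' ⊆ G.edgeSet ∧ ∀ t : Finset V, G.IsNClique 3 t → ∃ e ∈ triangleEdges t, e ∈ E'

/-- `τ△ G`: the minimum cardinality of a `𝒯`-transversal of `G`. -/
noncomputable def triTransversalNum (G : SimpleGraph V) : ℕ :=
  sInf {n | ∃ E' : Set (Sym2 V), IsTriTransversal G E' ∧ E'.ncard = n}

/-- `P` is a packing in `G`: a set of triangles of `G` that are pairwise edge-disjoint. -/
def IsTriPacking (G : SimpleGraph V) (P : Set (Finset V)) : Prop :=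
  (∀ t ∈ P, G.IsNClique 3 t) ∧
    P.Pairwise fun t t' => Disjoint (triangleEdges t) (triangleEdges t')

/-- `ν△ G`: the maximum cardinality of a packing of triangles in `G`. -/
noncomputable def triPackingNum (G : SimpleGraph V) : ℕ :=
  sSup {n | ∃ P : Set (Finset V), IsTriPacking G P ∧ P.ncard = n}

/-- The set of edges of `G` with one endpoint in `M` and the other in `W`. -/
def edgesBetween (G : SimpleGraph V) (M W : Set V) : Set (Sym2 V) :=
  {e | e ∈ G.edgeSet ∧ ∃ u ∈ M, ∃ w ∈ W, e = s(u, w)}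

/-- `G` is tripartite with parts `A`, `B`, `C`: the vertex set is partitioned into
the three independent sets `A`, `B`, `C`. -/
def IsTripartition (G : SimpleGraph V) (A B C : Set V) : Prop :=
  A ∪ B ∪ C = Set.univ ∧ Disjoint A B ∧ Disjoint A C ∧ Disjoint B C ∧
    (∀ u ∈ A, ∀ v ∈ A, ¬G.Adj u v) ∧ (∀ u ∈ B, ∀ v ∈ B, ¬G.Adj u v) ∧
    (∀ u ∈ C, ∀ v ∈ C, ¬G.Adj u v)

/-- The side `G[X ∪ Y]` of a tripartite graph is a complete bipartite graph. -/
def CompleteSide (G : SimpleGraph V) (X Y : Set V) : Prop :=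
  ∀ x ∈ X, ∀ y ∈ Y, G.Adj x y

/-- `W` is a vertex cover of the subgraph edge-induced by the edge set `Y`. -/
def CoversEdges (W : Set V) (Y : Set (Sym2 V)) : Prop :=
  ∀ e ∈ Y, ∃ v ∈ W, v ∈ e

/-- `M` is a matching consisting of edges from the edge set `F`:
the edges of `M` are pairwise vertex-disjoint. -/
def IsMatchingIn (F : Set (Sym2 V)) (M : Set (Sym2 V)) : Prop :=
  M ⊆ F ∧ M.Pairwise fun e f => ∀ v, v ∈ e → v ∉ f

instance [Fintype V] [DecidableEq V] (G : SimpleGraph V) [DecidableRel G.Adj] (M W : Set V)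
    [DecidablePred (· ∈ M)] [DecidablePred (· ∈ W)] : DecidablePred (· ∈ edgesBetween G M W) :=
  fun e => inferInstanceAs (Decidable (e ∈ G.edgeSet ∧ ∃ u ∈ M, ∃ w ∈ W, e = s(u, w)))

section TriangleEdges

variable {t t' : Finset V} {e : Sym2 V} {x : V}

theorem mem_of_mem_triangleEdges (he : e ∈ triangleEdges t) (hx : x ∈ e) : x ∈ t := by
  obtain ⟨u, hu, v, hv, -, rfl⟩ := he
  rcases Sym2.mem_iff.mp hx with rfl | rfl <;> assumption

theorem triangleEdges_inter [DecidableEq V] :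
    triangleEdges t ∩ triangleEdges t' = triangleEdges (t ∩ t') := by
  ext e
  constructor
  · rintro ⟨⟨u, hu, v, hv, huv, rfl⟩, he'⟩
    exact ⟨u, Finset.mem_inter.mpr ⟨hu, mem_of_mem_triangleEdges he' (Sym2.mem_mk_left u v)⟩,
      v, Finset.mem_inter.mpr ⟨hv, mem_of_mem_triangleEdges he' (Sym2.mem_mk_right u v)⟩, huv, rfl⟩
  · rintro ⟨u, hu, v, hv, huv, rfl⟩
    rw [Finset.mem_inter] at hu hv
    exact ⟨⟨u, hu.1, v, hv.1, huv, rfl⟩, ⟨u, hu.2, v, hv.2, huv, rfl⟩⟩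

theorem triangleEdges_subset_iff {S : Set (Sym2 V)} :
    triangleEdges t ⊆ S ↔ ∀ u ∈ t, ∀ v ∈ t, u ≠ v → s(u, v) ∈ S := by
  constructor
  · exact fun h u hu v hv huv => h ⟨u, hu, v, hv, huv, rfl⟩
  · rintro h _ ⟨u, hu, v, hv, huv, rfl⟩
    exact h u hu v hv huv

end TriangleEdges

def IsTriPackingOutside (G : SimpleGraph V) (S : Set (Sym2 V)) (T : Set (Finset V)) : Prop :=
  (∀ t ∈ T, G.IsNClique 3 t) ∧ T.Pairwise fun t t' => triangleEdges t ∩ triangleEdges t' ⊆ S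

section Transversal

variable {G : SimpleGraph V} {E' S : Set (Sym2 V)} {T : Set (Finset V)}

theorem isTriTransversal_of_forall_adj (hE : E' ⊆ G.edgeSet)
    (h : ∀ a b c, G.Adj a b → G.Adj a c → G.Adj b c → s(a, b) ∈ E' ∨ s(a, c) ∈ E' ∨ s(b, c) ∈ E') :
    IsTriTransversal G E' := by
  classical
  refine ⟨hE, fun t ht => ?_⟩
  obtain ⟨a, b, c, hab, hac, hbc, rfl⟩ := is3Clique_iff.mp ht
  rcases h a b c hab hac hbc with h | h | h
  · exact ⟨_, ⟨a, by simp, b, by simp, hab.ne, rfl⟩, h⟩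
  · exact ⟨_, ⟨a, by simp, c, by simp, hac.ne, rfl⟩, h⟩
  · exact ⟨_, ⟨b, by simp, c, by simp, hbc.ne, rfl⟩, h⟩

variable (G) in
theorem isTriTransversal_edgeSet : IsTriTransversal G G.edgeSet :=
  isTriTransversal_of_forall_adj subset_rfl fun _ _ _ hab _ _ => Or.inl hab

theorem IsTriTransversal.ncard_le_ncard (hE : IsTriTransversal G E') (hfin : E'.Finite)
    (hT : IsTriPackingOutside G S T) (hES : Disjoint E' S) : T.ncard ≤ E'.ncard := by
  have := hfin.to_subtype
  choose f hf using fun t : T => hE.2 t (hT.1 t t.2)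
  rw [← Nat.card_coe_set_eq, ← Nat.card_coe_set_eq]
  refine Nat.card_le_card_of_injective (fun t => ⟨f t, (hf t).2⟩) fun t t' hff => ?_
  by_contra hne
  have hft : f t = f t' := congrArg Subtype.val hff
  have hshared : f t ∈ triangleEdges t ∩ triangleEdges t' := ⟨(hf t).1, hft ▸ (hf t').1⟩
  exact Set.disjoint_left.mp hES (hf t).2 (hT.2 t.2 t'.2 (Subtype.coe_ne_coe.mpr hne) hshared)

theorem IsTriTransversal.inter_nonempty_of_ncard_lt (hE : IsTriTransversal G E')
    (hfin : E'.Finite) (hT : IsTriPackingOutside G S T) (hlt : E'.ncard < T.ncard) :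
    (E' ∩ S).Nonempty := by
  rw [← Set.not_disjoint_iff_nonempty_inter]
  exact fun hES => hlt.not_ge (hE.ncard_le_ncard hfin hT hES)

theorem IsTriPacking.isTriPackingOutside_empty {P : Set (Finset V)} (hP : IsTriPacking G P) :
    IsTriPackingOutside G ∅ P :=
  ⟨hP.1, hP.2.mono' fun _ _ h => h.inter_eq.subset⟩

theorem triTransversalNum_le_ncard (hE : IsTriTransversal G E') :
    triTransversalNum G ≤ E'.ncard :=
  Nat.sInf_le ⟨E', hE, rfl⟩

variable (G) in
theorem exists_isTriTransversal_ncard_eq :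
    ∃ E', IsTriTransversal G E' ∧ E'.ncard = triTransversalNum G :=
  Nat.sInf_mem (s := {n | ∃ E', IsTriTransversal G E' ∧ E'.ncard = n})
    ⟨_, _, isTriTransversal_edgeSet G, rfl⟩

theorem IsTriPacking.ncard_le_triTransversalNum [Finite V] {P : Set (Finset V)}
    (hP : IsTriPacking G P) : P.ncard ≤ triTransversalNum G := by
  obtain ⟨E', hE, hcard⟩ := exists_isTriTransversal_ncard_eq G
  exact hcard ▸ hE.ncard_le_ncard E'.toFinite hP.isTriPackingOutside_empty (Set.disjoint_empty _)

end Transversal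

section Example

set_option maxRecDepth 10000

def exampleGraph : SimpleGraph (Fin 10) :=
  SimpleGraph.fromRel fun u v =>
    (u < 2 ∧ 2 ≤ v) ∨ (u, v) ∈ ({(2, 6), (2, 7), (2, 8), (3, 8), (3, 9), (4, 9), (5, 9)} : Finset _)

instance : DecidableRel exampleGraph.Adj := fun u v =>
  inferInstanceAs (Decidable (u ≠ v ∧ (_ ∨ _)))

abbrev exampleA : Set (Fin 10) := {v | v < 2}
abbrev exampleB : Set (Fin 10) := {v | 2 ≤ v ∧ v < 6}
abbrev exampleC : Set (Fin 10) := {v | 6 ≤ v}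

theorem isTripartition_exampleGraph : IsTripartition exampleGraph exampleA exampleB exampleC :=
  ⟨Set.eq_univ_iff_forall.mpr (by decide), Set.disjoint_left.mpr (by decide),
    Set.disjoint_left.mpr (by decide), Set.disjoint_left.mpr (by decide),
    by decide, by decide, by decide⟩

def exampleCover : Finset (Sym2 (Fin 10)) := {s(0, 2), s(1, 2), s(0, 9), s(1, 9), s(3, 8)}

def examplePacking : Finset (Finset (Fin 10)) :=
  {{0, 2, 6}, {0, 3, 8}, {0, 4, 9}, {1, 2, 7}, {1, 5, 9}}

set_option synthInstance.maxSize 1000 in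
theorem isTriTransversal_exampleCover : IsTriTransversal exampleGraph exampleCover :=
  isTriTransversal_of_forall_adj (by simp only [Set.subset_def, Finset.mem_coe]; decide)
    (by simp only [Finset.mem_coe]; decide)

theorem isTriPacking_examplePacking : IsTriPacking exampleGraph examplePacking := by
  refine ⟨by decide, ?_⟩
  simp only [Set.disjoint_iff_inter_eq_empty, ← Set.subset_empty_iff, triangleEdges_inter,
    triangleEdges_subset_iff, Set.mem_empty_iff_false]
  decide

theorem triTransversalNum_exampleGraph : triTransversalNum exampleGraph = 5 :=
  le_antisymm
    ((triTransversalNum_le_ncard isTriTransversal_exampleCover).trans_eq (Set.ncard_coe_finset _))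
    ((Set.ncard_coe_finset _).symm.trans_le isTriPacking_examplePacking.ncard_le_triTransversalNum)

theorem isTriPackingOutside_edgesBetween_exampleA_exampleB :
    IsTriPackingOutside exampleGraph (edgesBetween exampleGraph exampleA exampleB)
      ↑({{0, 2, 6}, {0, 2, 7}, {0, 2, 8}, {1, 3, 8}, {0, 3, 9}, {1, 4, 9}} :
        Finset (Finset (Fin 10))) := by
  refine ⟨by decide, ?_⟩
  simp only [triangleEdges_inter, triangleEdges_subset_iff]
  decide

theorem isTriPackingOutside_edgesBetween_exampleA_exampleC :
    IsTriPackingOutside exampleGraph (edgesBetween exampleGraph exampleA exampleC)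
      ↑({{0, 2, 6}, {1, 2, 7}, {0, 3, 8}, {1, 3, 9}, {0, 4, 9}, {0, 5, 9}} :
        Finset (Finset (Fin 10))) := by
  refine ⟨by decide, ?_⟩
  simp only [triangleEdges_inter, triangleEdges_subset_iff]
  decide

theorem isTriPackingOutside_edgesBetween_exampleB_exampleC :
    IsTriPackingOutside exampleGraph (edgesBetween exampleGraph exampleB exampleC)
      ↑({{0, 2, 6}, {0, 3, 8}, {0, 4, 9}, {1, 2, 6}, {1, 3, 8}, {1, 4, 9}} :
        Finset (Finset (Fin 10))) := by
  refine ⟨by decide, ?_⟩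
  simp only [triangleEdges_inter, triangleEdges_subset_iff]
  decide

end Example

/-- There exists a bilaterally-complete tripartite graph `G` in which every minimum
`𝒯`-transversal contains an edge in each of the three sides of `G` (in particular,
no minimum `𝒯`-transversal is contained in the union of two sides), and the number
of edges of the smallest side of `G` is strictly greater than `τ△(G)`. -/
theorem exists_bilaterallyComplete_all_sides_needed :
    ∃ (V : Type) (_ : Fintype V) (G : SimpleGraph V) (A B C : Set V),
      IsTripartition G A B C ∧
      ((CompleteSide G A B ∧ CompleteSide G A C) ∨
       (CompleteSide G A B ∧ CompleteSide G B C) ∨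
       (CompleteSide G A C ∧ CompleteSide G B C)) ∧
      (∀ E' : Set (Sym2 V), IsTriTransversal G E' →
        E'.ncard = triTransversalNum G →
          (E' ∩ edgesBetween G A B).Nonempty ∧
          (E' ∩ edgesBetween G A C).Nonempty ∧
          (E' ∩ edgesBetween G B C).Nonempty) ∧
      triTransversalNum G <
        min (edgesBetween G A B).ncard
          (min (edgesBetween G A C).ncard (edgesBetween G B C).ncard) := by
  refine ⟨Fin 10, inferInstance, exampleGraph, exampleA, exampleB, exampleC,
    isTripartition_exampleGraph,
    Or.inl ⟨by unfold CompleteSide; decide, by unfold CompleteSide; decide⟩,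
    fun E' hE' hcard => ?_, ?_⟩
  · have meets {S : Set (Sym2 (Fin 10))} {T : Finset (Finset (Fin 10))}
        (hT : IsTriPackingOutside exampleGraph S T) (hT6 : T.card = 6) : (E' ∩ S).Nonempty :=
      hE'.inter_nonempty_of_ncard_lt E'.toFinite hT
        (by rw [hcard, triTransversalNum_exampleGraph, Set.ncard_coe_finset, hT6]; norm_num)
    exact ⟨meets isTriPackingOutside_edgesBetween_exampleA_exampleB rfl,
      meets isTriPackingOutside_edgesBetween_exampleA_exampleC rfl,
      meets isTriPackingOutside_edgesBetween_exampleB_exampleC rfl⟩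
  · rw [triTransversalNum_exampleGraph]
    simp only [Set.ncard_eq_toFinset_card']
    decide
end

section
/- Let G = (A,B,C;E) be a bilaterally-complete tripartite graph with complete sides G[A∪B] and G[A∪C] and |A| = p, and let H(G) be its network graph. Then every (s,t)-separator 𝒱′ of H(G) that is contained in V_BC ∪ B_1 ∪ ⋯ ∪ B_p ∪ C_1 ∪ ⋯ ∪ C_p gives rise to a 𝒯-transversal E′ of G with |E′| = |𝒱′|; namely, writing A = {a_1,…,a_p}, V′_BC = 𝒱′ ∩ V_BC, B′_i = 𝒱′ ∩ B_i and C′_i = 𝒱′ ∩ C_i, the set E′ = E′_BC ∪ ⋃_{i=1}^p E_{a_i W_i} is a 𝒯-transversal, where E′_BC ⊆ E_BC corresponds to V′_BC and W_i = B′_i ∪ C′_i (viewed as subsets of B and C). -/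
open SimpleGraph

variable {V : Type*}

/-- The vertices of the network graph `H(G)`: a source, a sink, `p` copies of the
`B`-side vertices, `p` copies of the `C`-side vertices, and one vertex for each
potential edge between `B` and `C`. -/
inductive NetVert (V : Type*) (p : ℕ) where
  | src : NetVert V p
  | snk : NetVert V p
  | bCopy (i : Fin p) (v : V) : NetVert V p
  | cCopy (i : Fin p) (v : V) : NetVert V p
  | mid (e : Sym2 V) : NetVert V p

/-- The arcs of the network graph `H(G)`: from the source to every copy of every
vertex of `B`; for every edge `e = uv ∈ E_BC` (`u ∈ B`, `v ∈ C`), from every copy of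
`u` to the vertex corresponding to `e` and from that vertex to every copy of `v`;
and from every copy of every vertex of `C` to the sink. -/
def netAdj (G : SimpleGraph V) (B C : Set V) (p : ℕ) :
    NetVert V p → NetVert V p → Prop
  | .src, .bCopy _ v => v ∈ B
  | .bCopy _ u, .mid e => u ∈ B ∧ e ∈ edgesBetween G B C ∧ u ∈ e
  | .mid e, .cCopy _ v => v ∈ C ∧ e ∈ edgesBetween G B C ∧ v ∈ e
  | .cCopy _ v, .snk => v ∈ C
  | _, _ => False

/-- The vertices of `H(G)` in `V_BC` corresponding to a set `S` of edges. -/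
def midSet (S : Set (Sym2 V)) (p : ℕ) : Set (NetVert V p) :=
  {x | ∃ e ∈ S, x = NetVert.mid e}

/-- The vertices of `H(G)` in `B_1 ∪ ⋯ ∪ B_p` that are copies of vertices in `S`. -/
def bCopySet (S : Set V) (p : ℕ) : Set (NetVert V p) :=
  {x | ∃ i : Fin p, ∃ v ∈ S, x = NetVert.bCopy i v}

/-- The vertices of `H(G)` in `C_1 ∪ ⋯ ∪ C_p` that are copies of vertices in `S`. -/
def cCopySet (S : Set V) (p : ℕ) : Set (NetVert V p) :=
  {x | ∃ i : Fin p, ∃ v ∈ S, x = NetVert.cCopy i v}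

/-- `S` is an `(s,t)`-separator of the digraph with arc relation `Adj`: a set of
vertices distinct from `s` and `t` whose removal breaks all directed paths from
`s` to `t`. -/
def IsSeparator {α : Type*} (Adj : α → α → Prop) (s t : α) (S : Set α) : Prop :=
  s ∉ S ∧ t ∉ S ∧
    ¬ Relation.ReflTransGen (fun u v => Adj u v ∧ u ∉ S ∧ v ∉ S) s t

/-- Auxiliary: classify members of a separator contained in the middle/copy layers. -/
lemma netvert_mem_cases {p : ℕ} {G : SimpleGraph V} {B C : Set V}
    {𝒱' : Set (NetVert V p)}
    (hsub : 𝒱' ⊆ midSet (edgesBetween G B C) p ∪ bCopySet B p ∪ cCopySet C p)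
    {x : NetVert V p} (hx : x ∈ 𝒱') :
    (∃ e ∈ edgesBetween G B C, x = NetVert.mid e) ∨
    (∃ i : Fin p, ∃ v ∈ B, x = NetVert.bCopy i v) ∨
    (∃ i : Fin p, ∃ v ∈ C, x = NetVert.cCopy i v) := by
  rcases hsub hx with (h | h) | h
  · exact Or.inl h
  · exact Or.inr (Or.inl h)
  · exact Or.inr (Or.inr h)

/-- Auxiliary: a triangle in a tripartite graph has one vertex in each part. -/
lemma tri_parts {G : SimpleGraph V} {A B C : Set V} (hpart : IsTripartition G A B C)
    {t : Finset V} (ht : G.IsNClique 3 t) :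
    ∃ x ∈ t, ∃ y ∈ t, ∃ z ∈ t, x ∈ A ∧ y ∈ B ∧ z ∈ C ∧
      G.Adj x y ∧ G.Adj x z ∧ G.Adj y z := by
  classical
  obtain ⟨hcover, -, -, -, hA, hB, hC⟩ := hpart
  obtain ⟨x, y, z, hxy, hxz, hyz, rfl⟩ := Finset.card_eq_three.mp ht.2
  have hx1 : x ∈ ({x, y, z} : Finset V) := by simp
  have hy1 : y ∈ ({x, y, z} : Finset V) := by simp
  have hz1 : z ∈ ({x, y, z} : Finset V) := by simp
  have axy : G.Adj x y := ht.1 (by simp) (by simp) hxy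
  have axz : G.Adj x z := ht.1 (by simp) (by simp) hxz
  have ayz : G.Adj y z := ht.1 (by simp) (by simp) hyz
  have px : x ∈ A ∪ B ∪ C := hcover.symm ▸ Set.mem_univ x
  have py : y ∈ A ∪ B ∪ C := hcover.symm ▸ Set.mem_univ y
  have pz : z ∈ A ∪ B ∪ C := hcover.symm ▸ Set.mem_univ z
  rcases px with (hx | hx) | hx <;> rcases py with (hy | hy) | hy <;>
    rcases pz with (hz | hz) | hz <;>
    first
    | exact ⟨x, hx1, y, hy1, z, hz1, hx, hy, hz, axy, axz, ayz⟩
    | exact ⟨x, hx1, z, hz1, y, hy1, hx, hz, hy, axz, axy, ayz.symm⟩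
    | exact ⟨y, hy1, x, hx1, z, hz1, hy, hx, hz, axy.symm, ayz, axz⟩
    | exact ⟨y, hy1, z, hz1, x, hx1, hy, hz, hx, ayz, axy.symm, axz.symm⟩
    | exact ⟨z, hz1, x, hx1, y, hy1, hz, hx, hy, axz.symm, ayz.symm, axy⟩
    | exact ⟨z, hz1, y, hy1, x, hx1, hz, hy, hx, ayz.symm, axz.symm, axy.symm⟩
    | exact absurd axy (hA x hx y hy)
    | exact absurd axy (hB x hx y hy)
    | exact absurd axy (hC x hx y hy)
    | exact absurd axz (hA x hx z hz)
    | exact absurd axz (hB x hx z hz)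
    | exact absurd axz (hC x hx z hz)
    | exact absurd ayz (hA y hy z hz)
    | exact absurd ayz (hB y hy z hz)
    | exact absurd ayz (hC y hy z hz)

/-- Auxiliary: the map from network vertices to edges. -/
noncomputable def netToEdge [Nonempty V] {p : ℕ} (a : Fin p → V) :
    NetVert V p → Sym2 V
  | .mid e => e
  | .bCopy i v => s(a i, v)
  | .cCopy i v => s(a i, v)
  | _ => s(Classical.arbitrary V, Classical.arbitrary V)

/-- Every `(s,t)`-separator `𝒱'` of the network graph `H(G)` contained in
`V_BC ∪ B_1 ∪ ⋯ ∪ B_p ∪ C_1 ∪ ⋯ ∪ C_p` gives rise to a `𝒯`-transversal `E'` of `G`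
with `|E'| = |𝒱'|`: writing `A = {a_1, …, a_p}` (enumerated by `a : Fin p → V`),
`E' = E'_BC ∪ ⋃_i E_{a_i, W_i}` where `E'_BC` corresponds to `𝒱' ∩ V_BC` and
`W_i = B'_i ∪ C'_i` consists of the vertices of `B` and `C` whose `i`-th copies
lie in `𝒱'`. -/
theorem transversal_of_separator [Fintype V] (G : SimpleGraph V)
    (A B C : Set V) (hpart : IsTripartition G A B C)
    (hAB : CompleteSide G A B) (hAC : CompleteSide G A C)
    (p : ℕ) (hp : A.ncard = p)
    (a : Fin p → V) (ha : Function.Injective a) (haA : Set.range a = A)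
    (𝒱' : Set (NetVert V p))
    (h𝒱'sub : 𝒱' ⊆ midSet (edgesBetween G B C) p ∪ bCopySet B p ∪ cCopySet C p)
    (hsep : IsSeparator (netAdj G B C p) NetVert.src NetVert.snk 𝒱') :
    IsTriTransversal G
        ({e : Sym2 V | NetVert.mid e ∈ 𝒱'} ∪
          ⋃ i : Fin p, edgesBetween G {a i}
            ({v | NetVert.bCopy i v ∈ 𝒱'} ∪ {v | NetVert.cCopy i v ∈ 𝒱'})) ∧
      ({e : Sym2 V | NetVert.mid e ∈ 𝒱'} ∪
          ⋃ i : Fin p, edgesBetween G {a i}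
            ({v | NetVert.bCopy i v ∈ 𝒱'} ∪ {v | NetVert.cCopy i v ∈ 𝒱'})).ncard =
        𝒱'.ncard := by
  obtain ⟨hcov, hdAB, hdAC, hdBC, hAind, hBind, hCind⟩ := hpart
  have haiA : ∀ i : Fin p, a i ∈ A := fun i => haA ▸ Set.mem_range_self i
  set E' : Set (Sym2 V) :=
    {e : Sym2 V | NetVert.mid e ∈ 𝒱'} ∪
      ⋃ i : Fin p, edgesBetween G {a i}
        ({v | NetVert.bCopy i v ∈ 𝒱'} ∪ {v | NetVert.cCopy i v ∈ 𝒱'}) with hE'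
  constructor
  · constructor
    · -- E' ⊆ edgeSet
      intro e he
      rcases he with he | he
      · rcases netvert_mem_cases h𝒱'sub he with ⟨e', he', heq⟩ | ⟨i, v, -, heq⟩ | ⟨i, v, -, heq⟩
        · obtain rfl : e = e' := by injection heq
          exact he'.1
        · exact absurd heq (by simp)
        · exact absurd heq (by simp)
      · rcases Set.mem_iUnion.mp he with ⟨i, hi⟩
        exact hi.1
    · -- meets every triangle
      intro t ht
      obtain ⟨x, hxt, y, hyt, z, hzt, hxA, hyB, hzC, hxy, hxz, hyz⟩ :=
        tri_parts ⟨hcov, hdAB, hdAC, hdBC, hAind, hBind, hCind⟩ ht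
      obtain ⟨i, rfl⟩ : ∃ i, a i = x := by rw [← haA] at hxA; exact hxA
      by_cases hm : NetVert.mid s(y, z) ∈ 𝒱'
      · exact ⟨s(y, z), ⟨y, hyt, z, hzt, hyz.ne, rfl⟩, Or.inl hm⟩
      by_cases hb : NetVert.bCopy i y ∈ 𝒱'
      · refine ⟨s(a i, y), ⟨a i, hxt, y, hyt, hxy.ne, rfl⟩, Or.inr ?_⟩
        exact Set.mem_iUnion.mpr ⟨i, G.mem_edgeSet.mpr hxy,
          a i, rfl, y, Or.inl hb, rfl⟩
      by_cases hc : NetVert.cCopy i z ∈ 𝒱'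
      · refine ⟨s(a i, z), ⟨a i, hxt, z, hzt, hxz.ne, rfl⟩, Or.inr ?_⟩
        exact Set.mem_iUnion.mpr ⟨i, G.mem_edgeSet.mpr hxz,
          a i, rfl, z, Or.inr hc, rfl⟩
      · exfalso
        apply hsep.2.2
        have hBC : s(y, z) ∈ edgesBetween G B C :=
          ⟨G.mem_edgeSet.mpr hyz, y, hyB, z, hzC, rfl⟩
        refine Relation.ReflTransGen.head ⟨?_, hsep.1, hb⟩
          (Relation.ReflTransGen.head ⟨?_, hb, hm⟩
            (Relation.ReflTransGen.head ⟨?_, hm, hc⟩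
              (Relation.ReflTransGen.single ⟨?_, hc, hsep.2.1⟩)))
        · exact hyB
        · exact ⟨hyB, hBC, by simp⟩
        · exact ⟨hzC, hBC, by simp⟩
        · exact hzC
  · -- cardinality
    rcases isEmpty_or_nonempty V with hV | hV
    · have h𝒱e : 𝒱' = ∅ := by
        ext x
        simp only [Set.mem_empty_iff_false, iff_false]
        intro hx
        rcases netvert_mem_cases h𝒱'sub hx with ⟨e, ⟨-, u, -, -⟩, -⟩ | ⟨i, v, -, -⟩ |
          ⟨i, v, -, -⟩
        · exact hV.false u
        · exact hV.false v
        · exact hV.false v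
      have hEe : E' = ∅ := by
        ext e
        simp only [Set.mem_empty_iff_false, iff_false]
        intro he
        rcases he with he | he
        · rw [h𝒱e] at he; exact he
        · rcases Set.mem_iUnion.mp he with ⟨i, -, u, -, -⟩
          exact hV.false u
      rw [hEe, h𝒱e]
      simp
    · have key : ∀ x ∈ 𝒱', ∀ y ∈ 𝒱', netToEdge a x = netToEdge a y → x = y := by
        have nB : ∀ i : Fin p, a i ∉ B := fun i => Set.disjoint_left.mp hdAB (haiA i)
        have nC : ∀ i : Fin p, a i ∉ C := fun i => Set.disjoint_left.mp hdAC (haiA i)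
        intro x hx y hy hfe
        rcases netvert_mem_cases h𝒱'sub hx with ⟨e₁, ⟨-, u₁, hu₁, w₁, hw₁, he₁⟩, rfl⟩ |
          ⟨i₁, v₁, hv₁, rfl⟩ | ⟨i₁, v₁, hv₁, rfl⟩ <;>
          rcases netvert_mem_cases h𝒱'sub hy with ⟨e₂, ⟨-, u₂, hu₂, w₂, hw₂, he₂⟩, rfl⟩ |
            ⟨i₂, v₂, hv₂, rfl⟩ | ⟨i₂, v₂, hv₂, rfl⟩ <;>
          simp only [netToEdge] at hfe
        · rw [hfe]
        · subst he₁
          rcases Sym2.eq_iff.mp hfe with ⟨h1, h2⟩ | ⟨h1, h2⟩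
          · exact absurd (h1 ▸ hu₁) (nB i₂)
          · exact absurd (h2 ▸ hw₁) (nC i₂)
        · subst he₁
          rcases Sym2.eq_iff.mp hfe with ⟨h1, h2⟩ | ⟨h1, h2⟩
          · exact absurd (h1 ▸ hu₁) (nB i₂)
          · exact absurd (h2 ▸ hw₁) (nC i₂)
        · subst he₂
          rcases Sym2.eq_iff.mp hfe with ⟨h1, h2⟩ | ⟨h1, h2⟩
          · exact absurd (h1.symm ▸ hu₂) (nB i₁)
          · exact absurd (h1.symm ▸ hw₂) (nC i₁)
        · rcases Sym2.eq_iff.mp hfe with ⟨h1, h2⟩ | ⟨h1, h2⟩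
          · rw [ha h1, h2]
          · exact absurd (h1.symm ▸ hv₂) (nB i₁)
        · rcases Sym2.eq_iff.mp hfe with ⟨h1, h2⟩ | ⟨h1, h2⟩
          · exact absurd (h2 ▸ hv₁) (Set.disjoint_right.mp hdBC hv₂)
          · exact absurd (h1.symm ▸ hv₂) (nC i₁)
        · subst he₂
          rcases Sym2.eq_iff.mp hfe with ⟨h1, h2⟩ | ⟨h1, h2⟩
          · exact absurd (h1.symm ▸ hu₂) (nB i₁)
          · exact absurd (h1.symm ▸ hw₂) (nC i₁)
        · rcases Sym2.eq_iff.mp hfe with ⟨h1, h2⟩ | ⟨h1, h2⟩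
          · exact absurd (h2 ▸ hv₁) (Set.disjoint_left.mp hdBC hv₂)
          · exact absurd (h1.symm ▸ hv₂) (nB i₁)
        · rcases Sym2.eq_iff.mp hfe with ⟨h1, h2⟩ | ⟨h1, h2⟩
          · rw [ha h1, h2]
          · exact absurd (h1.symm ▸ hv₂) (nC i₁)
      have himg : netToEdge a '' 𝒱' = E' := by
        ext e
        constructor
        · rintro ⟨x, hx, rfl⟩
          rcases netvert_mem_cases h𝒱'sub hx with ⟨e', he', rfl⟩ | ⟨i, v, hvB, rfl⟩ |
            ⟨i, v, hvC, rfl⟩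
          · exact Or.inl hx
          · exact Or.inr (Set.mem_iUnion.mpr ⟨i,
              G.mem_edgeSet.mpr (hAB (a i) (haiA i) v hvB),
              a i, rfl, v, Or.inl hx, rfl⟩)
          · exact Or.inr (Set.mem_iUnion.mpr ⟨i,
              G.mem_edgeSet.mpr (hAC (a i) (haiA i) v hvC),
              a i, rfl, v, Or.inr hx, rfl⟩)
        · rintro (he | he)
          · exact ⟨NetVert.mid e, he, rfl⟩
          · rcases Set.mem_iUnion.mp he with ⟨i, -, u, hu, w, hw, rfl⟩
            obtain rfl : u = a i := hu
            rcases hw with hw | hw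
            · exact ⟨NetVert.bCopy i w, hw, rfl⟩
            · exact ⟨NetVert.cCopy i w, hw, rfl⟩
      rw [← himg, Set.ncard_image_of_injOn key]
end
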